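/- Let w, a, b be vectors in the Euclidean plane with ‖w‖ ≤ √2 and ‖a‖ = ‖b‖ = 1. Then there exist signs δ, ε ∈ {±1} such that ‖w + δa + εb‖ ≤ √2. -/

import Mathlib

/-!
Put `u = a + b` and `v = a - b`: the four candidates are `w ± u` and `w ± v`, where `u ⊥ v` and
`‖u‖² + ‖v‖² = 4`. The better of `w ± u` has squared norm `‖w‖² + ‖u‖² - 2|⟪w, u⟫|`, and likewise
for `v`. In the plane, `u ⊥ v` gives the Parseval identity
`⟪w, u⟫² ‖v‖² + ⟪w, v⟫² ‖u‖² = ‖w‖² ‖u‖² ‖v‖²`. If both better choices had squared norm above 2,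
squaring the two inequalities, weighting them by `‖v‖²` and `‖u‖²` and adding would contradict
this identity, since `‖w‖² ≤ 2`.
-/

open Module RealInnerProductSpace

theorem le_two_or_le_two_of_sq_mul_add_sq_mul_eq {R P Q α β : ℝ} (hR₀ : 0 ≤ R) (hR₂ : R ≤ 2)
    (hPQ : P + Q = 4) (h : α ^ 2 * Q + β ^ 2 * P = R * P * Q) :
    R + P - 2 * |α| ≤ 2 ∨ R + Q - 2 * |β| ≤ 2 := by
  by_contra! ⟨hα, hβ⟩
  have hA : 0 < R + P - 2 := by linarith [abs_nonneg α]
  have hB : 0 < R + Q - 2 := by linarith [abs_nonneg β]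
  have hαQ : 4 * α ^ 2 * Q < (R + P - 2) ^ 2 * Q := by
    gcongr
    · linarith
    · nlinarith [sq_abs α, abs_nonneg α]
  have hβP : 4 * β ^ 2 * P < (R + Q - 2) ^ 2 * P := by
    gcongr
    · linarith
    · nlinarith [sq_abs β, abs_nonneg β]
  have key : (R + P - 2) ^ 2 * Q + (R + Q - 2) ^ 2 * P
      = 4 * (R * P * Q) - 4 * ((R + P - 2) * (R + Q - 2)) - 8 * (R * (2 - R)) := by
    linear_combination (R ^ 2 + P * Q - 4) * hPQ
  nlinarith [mul_pos hA hB, mul_nonneg hR₀ (by linarith : 0 ≤ 2 - R)]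

section InnerProductSpace

variable {E : Type*} [NormedAddCommGroup E] [InnerProductSpace ℝ E]

theorem exists_sign_norm_add_smul_sq (w u : E) :
    ∃ s : ℝ, (s = 1 ∨ s = -1) ∧ ‖w + s • u‖ ^ 2 = ‖w‖ ^ 2 + ‖u‖ ^ 2 - 2 * |⟪w, u⟫| := by
  rcases le_or_gt 0 ⟪w, u⟫ with h | h
  · refine ⟨-1, Or.inr rfl, ?_⟩
    rw [neg_one_smul, ← sub_eq_add_neg, norm_sub_sq_real, abs_of_nonneg h]
    ring
  · refine ⟨1, Or.inl rfl, ?_⟩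
    rw [one_smul, norm_add_sq_real, abs_of_neg h]
    ring

theorem inner_sq_mul_add_inner_sq_mul_of_finrank_eq_two (hE : finrank ℝ E = 2) {u v : E}
    (huv : ⟪u, v⟫ = 0) (w : E) :
    ⟪w, u⟫ ^ 2 * ‖v‖ ^ 2 + ⟪w, v⟫ ^ 2 * ‖u‖ ^ 2 = ‖w‖ ^ 2 * ‖u‖ ^ 2 * ‖v‖ ^ 2 := by
  rcases eq_or_ne u 0 with rfl | hu
  · simp
  rcases eq_or_ne v 0 with rfl | hv
  · simp
  have hli : LinearIndependent ℝ ![u, v] :=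
    linearIndependent_of_ne_zero_of_inner_eq_zero (by simp [Fin.forall_fin_two, hu, hv])
      (by simp [Pairwise, Fin.forall_fin_two, huv, real_inner_comm u v])
  have hspan : Submodule.span ℝ {u, v} = ⊤ := by
    rw [Set.pair_comm]
    simpa [Matrix.range_cons_cons_empty] using hli.span_eq_top_of_card_eq_finrank (by simp [hE])
  obtain ⟨c, d, rfl⟩ := Submodule.mem_span_pair.mp (hspan ▸ Submodule.mem_top : w ∈ _)
  have hvu : ⟪v, u⟫ = 0 := by rw [real_inner_comm, huv]
  simp only [inner_add_left, inner_smul_right, real_inner_smul_left, real_inner_self_eq_norm_sq,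
    huv, hvu, norm_add_sq_real, norm_smul, mul_pow, Real.norm_eq_abs, sq_abs]
  ring

theorem exists_signs_norm_add_smul_add_smul_le_sqrt_two (hE : finrank ℝ E = 2) {w a b : E}
    (hw : ‖w‖ ≤ √2) (ha : ‖a‖ = 1) (hb : ‖b‖ = 1) :
    ∃ δ ε : ℝ, (δ = 1 ∨ δ = -1) ∧ (ε = 1 ∨ ε = -1) ∧ ‖w + δ • a + ε • b‖ ≤ √2 := by
  have horth : ⟪a + b, a - b⟫ = 0 := (real_inner_add_sub_eq_zero_iff a b).mpr (ha.trans hb.symm)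
  have hdiag : ‖a + b‖ ^ 2 + ‖a - b‖ ^ 2 = 4 := by
    rw [norm_add_sq_real, norm_sub_sq_real, ha, hb]
    ring
  have hw₂ : ‖w‖ ^ 2 ≤ 2 := by
    simpa using pow_le_pow_left₀ (norm_nonneg w) hw 2
  obtain ⟨s, hs, hws⟩ := exists_sign_norm_add_smul_sq w (a + b)
  obtain ⟨t, ht, hwt⟩ := exists_sign_norm_add_smul_sq w (a - b)
  have hparseval := inner_sq_mul_add_inner_sq_mul_of_finrank_eq_two hE horth w
  rcases le_two_or_le_two_of_sq_mul_add_sq_mul_eq (sq_nonneg _) hw₂ hdiag hparseval with h | h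
  · refine ⟨s, s, hs, hs, Real.le_sqrt_of_sq_le ?_⟩
    rwa [add_assoc, ← smul_add, hws]
  · refine ⟨t, -t, ht, by rcases ht with rfl | rfl <;> norm_num, Real.le_sqrt_of_sq_le ?_⟩
    rwa [add_assoc, neg_smul, ← sub_eq_add_neg, ← smul_sub, hwt]

end InnerProductSpace

/-- If `‖w‖ ≤ √2` and `a, b` are unit vectors in the Euclidean plane, then
signs `δ, ε` can be chosen so that `‖w + δa + εb‖ ≤ √2`. -/
theorem online_step_euclidean_plane (w a b : EuclideanSpace ℝ (Fin 2))
    (hw : ‖w‖ ≤ Real.sqrt 2) (ha : ‖a‖ = 1) (hb : ‖b‖ = 1) :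
    ∃ δ ε : ℝ, (δ = 1 ∨ δ = -1) ∧ (ε = 1 ∨ ε = -1) ∧
      ‖w + δ • a + ε • b‖ ≤ Real.sqrt 2 :=
  exists_signs_norm_add_smul_add_smul_le_sqrt_two finrank_euclideanSpace_fin hw ha hb
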